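/- arXiv:1205.4810 — 4 statements merged into one kernel-verified Lean document; each statement's English description precedes it below -/
import Mathlib

section
/- Let S be a nonempty finite state type, A a nonempty finite action type, γ ∈ [0,1) a discount factor, p : S → A → S → ℝ a sub-stochastic transition kernel (p(s,a,s') ≥ 0 and Σ_{s'} p(s,a,s') ≤ γ for all s, a), r : S → A → ℝ a reward function, and π : S → A → ℝ a stochastic policy (π(s,a) ≥ 0 and Σ_a π(s,a) = 1 for all s). Then there exists a unique function v : S → ℝ satisfying the Bellman recursion v(s) = Σ_a π(s,a) · ( r(s,a) + Σ_{s'} p(s,a,s') · v(s') ) for every s ∈ S. -/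
/-!
Averaging over the policy turns the Bellman recursion into the affine fixed-point equation
`v = r_π + P_π v`, where `P_π s s' = ∑ a, π s a * p s a s'` is a nonnegative matrix with row sums
at most `γ`. Such a matrix is `γ`-Lipschitz for the sup metric, so for `γ < 1` the affine map is a
contraction of the complete space `S → ℝ` and Banach's fixed-point theorem applies.
-/

open Finset Matrix

namespace Matrix

variable {ι κ : Type*} [Fintype ι] [Fintype κ] {M : Matrix ι κ ℝ} {γ : ℝ}

theorem dist_mulVec_le_of_nonneg_of_sum_le (hγ : 0 ≤ γ) (hM0 : ∀ i j, 0 ≤ M i j)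
    (hM : ∀ i, ∑ j, M i j ≤ γ) (v w : κ → ℝ) :
    dist (M *ᵥ v) (M *ᵥ w) ≤ γ * dist v w := by
  refine (dist_pi_le_iff (mul_nonneg hγ dist_nonneg)).2 fun i => ?_
  calc dist ((M *ᵥ v) i) ((M *ᵥ w) i)
      = |∑ j, M i j * (v j - w j)| := by
        rw [Real.dist_eq, ← Pi.sub_apply, ← mulVec_sub]; rfl
    _ ≤ ∑ j, M i j * dist v w := by
        refine (abs_sum_le_sum_abs _ _).trans (sum_le_sum fun j _ => ?_)
        rw [abs_mul, abs_of_nonneg (hM0 i j), ← Real.dist_eq]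
        exact mul_le_mul_of_nonneg_left (dist_le_pi_dist v w j) (hM0 i j)
    _ = (∑ j, M i j) * dist v w := (sum_mul _ _ _).symm
    _ ≤ γ * dist v w := mul_le_mul_of_nonneg_right (hM i) dist_nonneg

theorem existsUnique_eq_add_mulVec {M : Matrix ι ι ℝ} (hγ0 : 0 ≤ γ) (hγ1 : γ < 1)
    (hM0 : ∀ i j, 0 ≤ M i j) (hM : ∀ i, ∑ j, M i j ≤ γ) (b : ι → ℝ) :
    ∃! v : ι → ℝ, v = b + M *ᵥ v := by
  have hT : ContractingWith ⟨γ, hγ0⟩ (fun v => b + M *ᵥ v) := by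
    refine ⟨by exact_mod_cast hγ1, LipschitzWith.of_dist_le_mul fun v w => ?_⟩
    rw [dist_add_left]
    exact dist_mulVec_le_of_nonneg_of_sum_le hγ0 hM0 hM v w
  exact ⟨hT.fixedPoint, hT.fixedPoint_isFixedPt.symm,
    fun v hv => hT.fixedPoint_unique hv.symm⟩

end Matrix

section Policy

variable {S A : Type*} [Fintype A]

def policyKernel (π : S → A → ℝ) (p : S → A → S → ℝ) : Matrix S S ℝ :=
  fun s s' => ∑ a, π s a * p s a s'

def policyReward (π r : S → A → ℝ) : S → ℝ :=
  fun s => ∑ a, π s a * r s a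

theorem policyKernel_nonneg {π : S → A → ℝ} {p : S → A → S → ℝ} (hπ0 : ∀ s a, 0 ≤ π s a)
    (hp0 : ∀ s a s', 0 ≤ p s a s') (s s' : S) : 0 ≤ policyKernel π p s s' :=
  sum_nonneg fun a _ => mul_nonneg (hπ0 s a) (hp0 s a s')

theorem sum_policyKernel_le [Fintype S] {π : S → A → ℝ} {p : S → A → S → ℝ} {γ : ℝ}
    (hπ0 : ∀ s a, 0 ≤ π s a) (hπsum : ∀ s, ∑ a, π s a = 1)
    (hpsum : ∀ s a, ∑ s', p s a s' ≤ γ) (s : S) : ∑ s', policyKernel π p s s' ≤ γ :=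
  calc ∑ s', policyKernel π p s s' = ∑ a, π s a * ∑ s', p s a s' := by
        simp only [policyKernel, mul_sum]; exact sum_comm
    _ ≤ ∑ a, π s a * γ := sum_le_sum fun a _ => mul_le_mul_of_nonneg_left (hpsum s a) (hπ0 s a)
    _ = γ := by rw [← sum_mul, hπsum, one_mul]

theorem sum_policy_mul_bellman_eq [Fintype S] (π r : S → A → ℝ) (p : S → A → S → ℝ)
    (v : S → ℝ) (s : S) :
    ∑ a, π s a * (r s a + ∑ s', p s a s' * v s') =
      (policyReward π r + policyKernel π p *ᵥ v) s := by
  simp only [Pi.add_apply, policyReward, policyKernel, mulVec, dotProduct, mul_add,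
    sum_add_distrib, mul_sum, sum_mul, mul_assoc]
  rw [sum_comm (f := fun a s' => π s a * (p s a s' * v s'))]

end Policy

theorem bellman_existsUnique_general
    {S A : Type*} [Fintype S] [Fintype A]
    (γ : ℝ) (hγ0 : 0 ≤ γ) (hγ1 : γ < 1)
    (p : S → A → S → ℝ)
    (hp0 : ∀ s a s', 0 ≤ p s a s')
    (hpsum : ∀ s a, (∑ s', p s a s') ≤ γ)
    (r : S → A → ℝ)
    (π : S → A → ℝ)
    (hπ0 : ∀ s a, 0 ≤ π s a)
    (hπsum : ∀ s, (∑ a, π s a) = 1) :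
    ∃! v : S → ℝ, ∀ s, v s = ∑ a, π s a * (r s a + ∑ s', p s a s' * v s') := by
  simp_rw [sum_policy_mul_bellman_eq, ← funext_iff]
  exact Matrix.existsUnique_eq_add_mulVec hγ0 hγ1 (policyKernel_nonneg hπ0 hp0)
    (sum_policyKernel_le hπ0 hπsum hpsum) _

/-- Existence and uniqueness of the value function: the Bellman recursion in a
sub-stochastic (γ-discounted) finite MDP under a stochastic policy has a unique solution. -/
theorem bellman_existsUnique
    {S A : Type*} [Fintype S] [Nonempty S] [Fintype A] [Nonempty A]
    (γ : ℝ) (hγ0 : 0 ≤ γ) (hγ1 : γ < 1)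
    (p : S → A → S → ℝ)
    (hp0 : ∀ s a s', 0 ≤ p s a s')
    (hpsum : ∀ s a, (∑ s', p s a s') ≤ γ)
    (r : S → A → ℝ)
    (π : S → A → ℝ)
    (hπ0 : ∀ s a, 0 ≤ π s a)
    (hπsum : ∀ s, (∑ a, π s a) = 1) :
    ∃! v : S → ℝ, ∀ s, v s = ∑ a, π s a * (r s a + ∑ s', p s a s' * v s') :=
  bellman_existsUnique_general γ hγ0 hγ1 p hp0 hpsum r π hπ0 hπsum
end

section
/- (Exact reward correction, Lemma 1.) Let S be a nonempty finite state type, A a nonempty finite action type, γ ∈ [0,1), and π : S → A → ℝ a stochastic policy (π(s,a) ≥ 0 and Σ_a π(s,a) = 1 for all s). Let a finite belief be given by n ≥ 1 sampled MDPs: transition kernels P_i : S → A → S → ℝ with P_i(s,a,s') ≥ 0 and Σ_{s'} P_i(s,a,s') ≤ γ, rewards R_i : S → A → ℝ, and weights β_i ≥ 0 with Σ_{i=1}^n β_i = 1. Write p = Σ_i β_i P_i and r = Σ_i β_i R_i. For each i let v_i : S → ℝ satisfy the Bellman recursion v_i(s) = Σ_a π(s,a) · ( R_i(s,a) + Σ_{s'}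 P_i(s,a,s') · v_i(s') ) for all s. Define the policy-dependent reward correction σ^{β,π}(s,a) := Σ_{s'} Σ_i β_i · ( P_i(s,a,s') − p(s,a,s') ) · v_i(s'), and let v̄ : S → ℝ satisfy the Bellman recursion for the mean MDP with corrected reward: v̄(s) = Σ_a π(s,a) · ( r(s,a) + σ^{β,π}(s,a) + Σ_{s'} p(s,a,s') · v̄(s') ) for all s. Then Σ_i β_i · v_i(s) = v̄(s) for every s ∈ S. -/
/-!
The belief-weighted average `∑ i, β i * v i` satisfies the Bellman equation of the mean MDP with
corrected reward: the correction `σ` is exactly the gap between `∑ i, β i * (P i v i)` and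
`p (∑ i, β i * v i)`, for any reference kernel `p`. When `p` is the mean kernel it is
`γ`-substochastic, so the policy-evaluation operator is a `γ`-contraction in the sup norm and its
fixed point `vbar` is unique.
-/

open Finset

lemma abs_sum_mul_le_sum_mul_norm {ι : Type*} [Fintype ι] {w f : ι → ℝ} (hw : ∀ i, 0 ≤ w i) :
    |∑ i, w i * f i| ≤ (∑ i, w i) * ‖f‖ :=
  calc |∑ i, w i * f i| ≤ ∑ i, |w i * f i| := abs_sum_le_sum_abs _ _
    _ ≤ ∑ i, w i * ‖f‖ := sum_le_sum fun i _ => by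
        rw [abs_mul, abs_of_nonneg (hw i)]
        exact mul_le_mul_of_nonneg_left (norm_le_pi_norm f i) (hw i)
    _ = (∑ i, w i) * ‖f‖ := (sum_mul _ _ _).symm

lemma sum_sum_mul_le_of_sum_le {ι S : Type*} [Fintype ι] [Fintype S] {β : ι → ℝ}
    (hβ0 : ∀ i, 0 ≤ β i) (hβ1 : ∑ i, β i = 1) {γ : ℝ} {P : ι → S → ℝ}
    (hP : ∀ i, ∑ s, P i s ≤ γ) : ∑ s, ∑ i, β i * P i s ≤ γ :=
  calc ∑ s, ∑ i, β i * P i s = ∑ i, β i * ∑ s, P i s := by rw [sum_comm]; simp only [mul_sum]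
    _ ≤ ∑ i, β i * γ := sum_le_sum fun i _ => mul_le_mul_of_nonneg_left (hP i) (hβ0 i)
    _ = γ := by rw [← sum_mul, hβ1, one_mul]

section

variable {S A ι : Type*} [Fintype S] [Fintype ι]

def bellmanOp [Fintype A] (π : S → A → ℝ) (r : S → A → ℝ) (p : S → A → S → ℝ) (u : S → ℝ) :
    S → ℝ :=
  fun s => ∑ a, π s a * (r s a + ∑ s', p s a s' * u s')

def rewardCorrection (β : ι → ℝ) (P : ι → S → A → S → ℝ)
    (p : S → A → S → ℝ) (v : ι → S → ℝ) : S → A → ℝ :=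
  fun s a => ∑ s', ∑ i, β i * ((P i s a s' - p s a s') * v i s')

lemma bellmanOp_sub_bellmanOp [Fintype A] (π r : S → A → ℝ) (p : S → A → S → ℝ) (u w : S → ℝ)
    (s : S) :
    bellmanOp π r p u s - bellmanOp π r p w s = ∑ a, π s a * ∑ s', p s a s' * (u - w) s' := by
  simp only [bellmanOp, Pi.sub_apply, mul_sub, sum_sub_distrib, mul_add, sum_add_distrib]
  ring

lemma norm_bellmanOp_sub_le [Fintype A] {γ : ℝ} (hγ : 0 ≤ γ) {π : S → A → ℝ}
    (hπ0 : ∀ s a, 0 ≤ π s a) (hπ1 : ∀ s, ∑ a, π s a ≤ 1) {p : S → A → S → ℝ}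
    (hp0 : ∀ s a s', 0 ≤ p s a s') (hpγ : ∀ s a, ∑ s', p s a s' ≤ γ) (r : S → A → ℝ) (u w : S → ℝ) :
    ‖bellmanOp π r p u - bellmanOp π r p w‖ ≤ γ * ‖u - w‖ := by
  have hγuw : 0 ≤ γ * ‖u - w‖ := mul_nonneg hγ (norm_nonneg _)
  refine (pi_norm_le_iff_of_nonneg hγuw).2 fun s => ?_
  have hnext : ‖fun a => ∑ s', p s a s' * (u - w) s'‖ ≤ γ * ‖u - w‖ :=
    (pi_norm_le_iff_of_nonneg hγuw).2 fun a =>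
      (abs_sum_mul_le_sum_mul_norm (hp0 s a)).trans
        (mul_le_mul_of_nonneg_right (hpγ s a) (norm_nonneg _))
  rw [Pi.sub_apply, bellmanOp_sub_bellmanOp, Real.norm_eq_abs]
  calc _ ≤ (∑ a, π s a) * ‖fun a => ∑ s', p s a s' * (u - w) s'‖ :=
        abs_sum_mul_le_sum_mul_norm (hπ0 s)
    _ ≤ 1 * (γ * ‖u - w‖) := mul_le_mul (hπ1 s) hnext (norm_nonneg _) zero_le_one
    _ = γ * ‖u - w‖ := one_mul _

lemma eq_of_bellmanOp_eq [Fintype A] {γ : ℝ} (hγ0 : 0 ≤ γ) (hγ1 : γ < 1) {π : S → A → ℝ}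
    (hπ0 : ∀ s a, 0 ≤ π s a) (hπ1 : ∀ s, ∑ a, π s a ≤ 1) {p : S → A → S → ℝ}
    (hp0 : ∀ s a s', 0 ≤ p s a s') (hpγ : ∀ s a, ∑ s', p s a s' ≤ γ) {r : S → A → ℝ}
    {u w : S → ℝ} (hu : bellmanOp π r p u = u) (hw : bellmanOp π r p w = w) : u = w := by
  have h := norm_bellmanOp_sub_le hγ0 hπ0 hπ1 hp0 hpγ r u w
  rw [hu, hw] at h
  exact sub_eq_zero.1 (norm_le_zero_iff.1 (by nlinarith [norm_nonneg (u - w)]))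

lemma rewardCorrection_add_sum_mul (β : ι → ℝ) (P : ι → S → A → S → ℝ) (p : S → A → S → ℝ)
    (v : ι → S → ℝ) (s : S) (a : A) :
    rewardCorrection β P p v s a + ∑ s', p s a s' * ∑ i, β i * v i s' =
      ∑ i, β i * ∑ s', P i s a s' * v i s' := by
  simp only [rewardCorrection, mul_sum, ← sum_add_distrib]
  rw [sum_comm]
  exact sum_congr rfl fun s' _ => sum_congr rfl fun i _ => by ring

lemma sum_mul_bellmanOp [Fintype A] (π : S → A → ℝ) (β : ι → ℝ) (R : ι → S → A → ℝ)
    (P : ι → S → A → S → ℝ) (p : S → A → S → ℝ) (v : ι → S → ℝ) (s : S) :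
    ∑ i, β i * bellmanOp π (R i) (P i) (v i) s =
      bellmanOp π ((fun s a => ∑ i, β i * R i s a) + rewardCorrection β P p v) p
        (fun s => ∑ i, β i * v i s) s := by
  simp only [bellmanOp, Pi.add_apply, add_assoc, rewardCorrection_add_sum_mul]
  simp only [mul_sum, ← sum_add_distrib]
  rw [sum_comm]
  exact sum_congr rfl fun a _ => sum_congr rfl fun i _ => by rw [← mul_sum]; ring

end

theorem exact_reward_correction_general
    {S A : Type*} [Fintype S] [Fintype A]
    (γ : ℝ) (hγ0 : 0 ≤ γ) (hγ1 : γ < 1)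
    (π : S → A → ℝ)
    (hπ0 : ∀ s a, 0 ≤ π s a)
    (hπsum : ∀ s, (∑ a, π s a) = 1)
    (n : ℕ)
    (P : Fin n → S → A → S → ℝ)
    (hP0 : ∀ i s a s', 0 ≤ P i s a s')
    (hPsum : ∀ i s a, (∑ s', P i s a s') ≤ γ)
    (R : Fin n → S → A → ℝ)
    (β : Fin n → ℝ) (hβ0 : ∀ i, 0 ≤ β i) (hβsum : (∑ i, β i) = 1)
    (p : S → A → S → ℝ) (hp : p = fun s a s' => ∑ i, β i * P i s a s')
    (r : S → A → ℝ) (hr : r = fun s a => ∑ i, β i * R i s a)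
    (v : Fin n → S → ℝ)
    (hv : ∀ i s, v i s = ∑ a, π s a * (R i s a + ∑ s', P i s a s' * v i s'))
    (σ : S → A → ℝ)
    (hσ : σ = fun s a => ∑ s', ∑ i, β i * ((P i s a s' - p s a s') * v i s'))
    (vbar : S → ℝ)
    (hvbar : ∀ s, vbar s = ∑ a, π s a * (r s a + σ s a + ∑ s', p s a s' * vbar s')) :
    ∀ s, (∑ i, β i * v i s) = vbar s := by
  have hp0 : ∀ s a s', 0 ≤ p s a s' := fun s a s' => by
    rw [hp]; exact sum_nonneg fun i _ => mul_nonneg (hβ0 i) (hP0 i s a s')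
  have hpγ : ∀ s a, ∑ s', p s a s' ≤ γ := fun s a => by
    rw [hp]; exact sum_sum_mul_le_of_sum_le hβ0 hβsum fun i => hPsum i s a
  have hσ' : σ = rewardCorrection β P p v := hσ
  have hmix : bellmanOp π (r + σ) p (fun s => ∑ i, β i * v i s) = fun s => ∑ i, β i * v i s :=
    funext fun s => by
      rw [hr, hσ', ← sum_mul_bellmanOp]
      exact sum_congr rfl fun i _ => by rw [bellmanOp, ← hv]
  have hvbar' : bellmanOp π (r + σ) p vbar = vbar := (funext hvbar).symm
  exact congrFun (eq_of_bellmanOp_eq hγ0 hγ1 hπ0 (fun s => (hπsum s).le) hp0 hpγ hmix hvbar')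

/-- Exact reward correction (Lemma 1): the belief-expected value function equals the
value function of the mean MDP with rewards corrected by the exact, policy-dependent
correction σ^{β,π}. -/
theorem exact_reward_correction
    {S A : Type*} [Fintype S] [Nonempty S] [Fintype A] [Nonempty A]
    (γ : ℝ) (hγ0 : 0 ≤ γ) (hγ1 : γ < 1)
    (π : S → A → ℝ)
    (hπ0 : ∀ s a, 0 ≤ π s a)
    (hπsum : ∀ s, (∑ a, π s a) = 1)
    (n : ℕ) (hn : 1 ≤ n)
    (P : Fin n → S → A → S → ℝ)
    (hP0 : ∀ i s a s', 0 ≤ P i s a s')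
    (hPsum : ∀ i s a, (∑ s', P i s a s') ≤ γ)
    (R : Fin n → S → A → ℝ)
    (β : Fin n → ℝ) (hβ0 : ∀ i, 0 ≤ β i) (hβsum : (∑ i, β i) = 1)
    (p : S → A → S → ℝ) (hp : p = fun s a s' => ∑ i, β i * P i s a s')
    (r : S → A → ℝ) (hr : r = fun s a => ∑ i, β i * R i s a)
    (v : Fin n → S → ℝ)
    (hv : ∀ i s, v i s = ∑ a, π s a * (R i s a + ∑ s', P i s a s' * v i s'))
    (σ : S → A → ℝ)
    (hσ : σ = fun s a => ∑ s', ∑ i, β i * ((P i s a s' - p s a s') * v i s'))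
    (vbar : S → ℝ)
    (hvbar : ∀ s, vbar s = ∑ a, π s a * (r s a + σ s a + ∑ s', p s a s' * vbar s')) :
    ∀ s, (∑ i, β i * v i s) = vbar s :=
  exact_reward_correction_general γ hγ0 hγ1 π hπ0 hπsum n P hP0 hPsum R β hβ0 hβsum p hp r hr v hv σ
    hσ vbar hvbar
end

section
/- (Theorem 2: lower bound via the min-correction.) Let S be a nonempty finite state type, A a nonempty finite action type, γ ∈ [0,1), and π : S → A → ℝ a stochastic policy (π(s,a) ≥ 0 and Σ_a π(s,a) = 1 for all s). Let a finite belief be given by n ≥ 1 sampled MDPs: transition kernels P_i : S → A → S → ℝ with P_i(s,a,s') ≥ 0 and Σ_{s'} P_i(s,a,s') ≤ γ, rewards R_i : S → A → ℝ, and weights β_i ≥ 0 with Σ_{i=1}^n β_i = 1. Write p = Σ_i β_i P_i and r = Σ_i β_i R_i. For each i let v_i : S → ℝ satisfy v_i(s) = Σ_a π(s,a) · ( R_i(s,a) + Σ_{s'} P_i(s,a,s') · v_i(s') ) for all s, and assume 0 ≤ v_i(s) ≤ 1 for all i and s. Define σ^β(s,a) := Σ_{s'} Σ_i β_i · min(0,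 P_i(s,a,s') − p(s,a,s')), and let w : S → ℝ satisfy w(s) = Σ_a π(s,a) · ( r(s,a) + σ^β(s,a) + Σ_{s'} p(s,a,s') · w(s') ) for all s. Then Σ_i β_i · v_i(s) ≥ w(s) for every s ∈ S. -/
/-- Theorem 2: if the value functions of all sampled MDPs lie in [0,1], then the value
function of the mean MDP with the policy-independent min-correction σ^β is a lower
bound on the belief-expected value function. -/
theorem min_correction_lower_bound
    {S A : Type*} [Fintype S] [Nonempty S] [Fintype A] [Nonempty A]
    (γ : ℝ) (hγ0 : 0 ≤ γ) (hγ1 : γ < 1)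
    (π : S → A → ℝ)
    (hπ0 : ∀ s a, 0 ≤ π s a)
    (hπsum : ∀ s, (∑ a, π s a) = 1)
    (n : ℕ) (hn : 1 ≤ n)
    (P : Fin n → S → A → S → ℝ)
    (hP0 : ∀ i s a s', 0 ≤ P i s a s')
    (hPsum : ∀ i s a, (∑ s', P i s a s') ≤ γ)
    (R : Fin n → S → A → ℝ)
    (β : Fin n → ℝ) (hβ0 : ∀ i, 0 ≤ β i) (hβsum : (∑ i, β i) = 1)
    (p : S → A → S → ℝ) (hp : p = fun s a s' => ∑ i, β i * P i s a s')
    (r : S → A → ℝ) (hr : r = fun s a => ∑ i, β i * R i s a)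
    (v : Fin n → S → ℝ)
    (hv : ∀ i s, v i s = ∑ a, π s a * (R i s a + ∑ s', P i s a s' * v i s'))
    (hv01 : ∀ i s, 0 ≤ v i s ∧ v i s ≤ 1)
    (σ : S → A → ℝ)
    (hσ : σ = fun s a => ∑ s', ∑ i, β i * min 0 (P i s a s' - p s a s'))
    (w : S → ℝ)
    (hw : ∀ s, w s = ∑ a, π s a * (r s a + σ s a + ∑ s', p s a s' * w s')) :
    ∀ s, w s ≤ ∑ i, β i * v i s := by
  classical
  set u : S → ℝ := fun s => (∑ i, β i * v i s) - w s with hu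
  suffices h : ∀ s, 0 ≤ u s by
    intro s; have := h s; simp only [hu] at this; linarith
  -- basic facts about p
  have hp0 : ∀ s a s', 0 ≤ p s a s' := by
    intro s a s'; rw [hp]
    exact Finset.sum_nonneg fun i _ => mul_nonneg (hβ0 i) (hP0 i s a s')
  have hpsum : ∀ s a, (∑ s', p s a s') ≤ γ := by
    intro s a; rw [hp]
    calc (∑ s', ∑ i, β i * P i s a s') = ∑ i, ∑ s', β i * P i s a s' := Finset.sum_comm
      _ = ∑ i, β i * ∑ s', P i s a s' := by simp [Finset.mul_sum]
      _ ≤ ∑ i, β i * γ :=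
          Finset.sum_le_sum fun i _ => mul_le_mul_of_nonneg_left (hPsum i s a) (hβ0 i)
      _ = γ := by rw [← Finset.sum_mul, hβsum, one_mul]
  -- expression for u
  have hus : ∀ s, u s = ∑ a, π s a *
      ((∑ s', ∑ i, β i * (P i s a s' * v i s')) - σ s a - ∑ s', p s a s' * w s') := by
    intro s
    have h1 : (∑ i, β i * v i s) = ∑ a, π s a *
        ((∑ i, β i * R i s a) + ∑ s', ∑ i, β i * (P i s a s' * v i s')) := by
      calc (∑ i, β i * v i s)
          = ∑ i, β i * ∑ a, π s a * (R i s a + ∑ s', P i s a s' * v i s') := by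
            exact Finset.sum_congr rfl fun i _ => by rw [← hv]
        _ = ∑ i, ∑ a, β i * (π s a * (R i s a + ∑ s', P i s a s' * v i s')) := by
            simp [Finset.mul_sum]
        _ = ∑ a, ∑ i, β i * (π s a * (R i s a + ∑ s', P i s a s' * v i s')) := Finset.sum_comm
        _ = ∑ a, π s a * ((∑ i, β i * R i s a) + ∑ s', ∑ i, β i * (P i s a s' * v i s')) := by
            refine Finset.sum_congr rfl fun a _ => ?_
            have hi : ∀ i, β i * (π s a * (R i s a + ∑ s', P i s a s' * v i s')) =
                π s a * (β i * R i s a) + π s a * (β i * ∑ s', P i s a s' * v i s') :=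
              fun i => by ring
            rw [Finset.sum_congr rfl fun i _ => hi i, Finset.sum_add_distrib,
              ← Finset.mul_sum, ← Finset.mul_sum, ← mul_add]
            congr 1
            congr 1
            rw [Finset.sum_comm]
            exact Finset.sum_congr rfl fun i _ => by
              rw [Finset.mul_sum]
    have h2 : w s = ∑ a, π s a *
        ((∑ i, β i * R i s a) + σ s a + ∑ s', p s a s' * w s') := by
      rw [hw s, hr]
    simp only [hu]
    rw [h1, h2, ← Finset.sum_sub_distrib]
    refine Finset.sum_congr rfl fun a _ => ?_
    ring
  -- find the minimizer
  obtain ⟨s₀, -, hs₀⟩ := Finset.exists_min_image Finset.univ u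
    ⟨Classical.arbitrary S, Finset.mem_univ _⟩
  have hmin : ∀ s, u s₀ ≤ u s := fun s => hs₀ s (Finset.mem_univ s)
  intro s
  refine le_trans ?_ (hmin s)
  by_contra hneg
  push_neg at hneg
  -- key contraction inequality
  have key : γ * u s₀ ≤ u s₀ := by
    nth_rewrite 2 [hus s₀]
    have brac : ∀ a, γ * u s₀ ≤
        (∑ s', ∑ i, β i * (P i s₀ a s' * v i s')) - σ s₀ a - ∑ s', p s₀ a s' * w s' := by
      intro a
      have step1 : (∑ s', p s₀ a s' * u s') ≤
          (∑ s', ∑ i, β i * (P i s₀ a s' * v i s')) - σ s₀ a - ∑ s', p s₀ a s' * w s' := by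
        rw [hσ]
        simp only
        rw [← Finset.sum_sub_distrib, ← Finset.sum_sub_distrib]
        refine Finset.sum_le_sum fun s' _ => ?_
        have hpv : p s₀ a s' * u s' + p s₀ a s' * w s' = ∑ i, β i * (p s₀ a s' * v i s') := by
          have h0 : p s₀ a s' * u s' + p s₀ a s' * w s' =
              p s₀ a s' * (∑ i, β i * v i s') := by simp only [hu]; ring
          rw [h0, Finset.mul_sum]
          exact Finset.sum_congr rfl fun i _ => by ring
        have : ∀ i, β i * min 0 (P i s₀ a s' - p s₀ a s') ≤
            β i * (P i s₀ a s' * v i s') - β i * (p s₀ a s' * v i s') := by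
          intro i
          have hv0 := (hv01 i s').1
          have hv1 := (hv01 i s').2
          rcases le_or_gt (p s₀ a s') (P i s₀ a s') with hc | hc
          · rw [min_eq_left (by linarith)]
            nlinarith [mul_nonneg (hβ0 i)
              (mul_nonneg (sub_nonneg.2 hc) hv0)]
          · rw [min_eq_right (by linarith)]
            nlinarith [mul_nonneg (hβ0 i)
              (mul_nonneg (by linarith : (0:ℝ) ≤ p s₀ a s' - P i s₀ a s')
                (by linarith : (0:ℝ) ≤ 1 - v i s'))]
        have hsum := Finset.sum_le_sum (fun i (_ : i ∈ Finset.univ) => this i)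
        rw [Finset.sum_sub_distrib] at hsum
        linarith [hpv, hsum]
      refine le_trans ?_ step1
      have hm0 : u s₀ < 0 := hneg
      calc γ * u s₀ ≤ (∑ s', p s₀ a s') * u s₀ := by
            nlinarith [hpsum s₀ a]
        _ = ∑ s', p s₀ a s' * u s₀ := by rw [Finset.sum_mul]
        _ ≤ ∑ s', p s₀ a s' * u s' :=
            Finset.sum_le_sum fun s' _ =>
              mul_le_mul_of_nonneg_left (hmin s') (hp0 s₀ a s')
    calc γ * u s₀ = ∑ a, π s₀ a * (γ * u s₀) := by
          rw [← Finset.sum_mul, hπsum, one_mul]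
      _ ≤ _ := Finset.sum_le_sum fun a _ =>
          mul_le_mul_of_nonneg_left (brac a) (hπ0 s₀ a)
  nlinarith
end

section
/- Let S be a nonempty finite state type, P : S → S → ℝ a row-stochastic matrix (P(s,s') ≥ 0 and Σ_{s'} P(s,s') = 1 for all s), and s₀ ∈ S. Define the killed matrix Q : S → S → ℝ by Q(s,s') = 0 if s = s₀ and Q(s,s') = P(s,s') otherwise. Then for every n ∈ ℕ and every s ∈ S: Σ over all trajectories w : Fin (n+1) → S with w(0) = s of ( Π_{t=1}^{n} P(w(t−1), w(t)) ) · 1{ ∃ t ≤ n, w(t) = s₀ } = Σ_{t=0}^{n} (Q^t)(s, s₀), where Q^t denotes the t-th matrix power of Q. -/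
/-!
Write `h n s` for the weight of length-`n` trajectories from `s` that visit `s₀`. Conditioning
on the first step gives `h (n + 1) s = 1` if `s = s₀` (every trajectory from `s₀` visits it, and
the trajectory weights from any state sum to `1`), and `h (n + 1) s = ∑ s', P s s' * h n s'`
otherwise. Since the row of `Q` at `s₀` vanishes and
`∑_{t ≤ n+1} Q^t = 1 + Q * ∑_{t ≤ n} Q^t`, the entries `(∑_{t ≤ n} Q^t) s s₀` satisfy the same
recurrence, with the same initial values.
-/

open Finset

namespace MarkovChain

variable {S : Type*}

def pathWeight (P : Matrix S S ℝ) {n : ℕ} (w : Fin (n + 1) → S) : ℝ :=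
  ∏ t : Fin n, P (w t.castSucc) (w t.succ)

lemma pathWeight_cons (P : Matrix S S ℝ) {n : ℕ} (a : S) (g : Fin (n + 1) → S) :
    pathWeight P (Fin.cons a g : Fin (n + 2) → S) = P a (g 0) * pathWeight P g := by
  simp [pathWeight, Fin.prod_univ_succ]

def killed [DecidableEq S] (P : Matrix S S ℝ) (s₀ : S) : Matrix S S ℝ :=
  Matrix.of fun s s' => if s = s₀ then 0 else P s s'

variable [Fintype S] [DecidableEq S]

lemma sum_ite_head_eq {M : Type*} [AddCommMonoid M] {n : ℕ} (F : (Fin (n + 2) → S) → M)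
    (s : S) :
    ∑ w : Fin (n + 2) → S, (if w 0 = s then F w else 0) =
      ∑ g : Fin (n + 1) → S, F (Fin.cons s g) := by
  rw [← (Fin.consEquiv fun _ => S).sum_comp, Fintype.sum_prod_type]
  simp [Fin.consEquiv]

lemma sum_eq_sum_ite_head {M : Type*} [AddCommMonoid M] {n : ℕ}
    (F : (Fin (n + 1) → S) → M) :
    ∑ g, F g = ∑ s', ∑ g : Fin (n + 1) → S, if g 0 = s' then F g else 0 := by
  rw [sum_comm]
  simp

def pathExpect (P : Matrix S S ℝ) (n : ℕ) (s : S) (G : (Fin (n + 1) → S) → ℝ) : ℝ :=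
  ∑ w : Fin (n + 1) → S, if w 0 = s then pathWeight P w * G w else 0

lemma pathExpect_zero (P : Matrix S S ℝ) (s : S) (G : (Fin 1 → S) → ℝ) :
    pathExpect P 0 s G = G (fun _ => s) := by
  rw [pathExpect, ← (Equiv.funUnique (Fin 1) S).symm.sum_comp]
  simp [pathWeight]
  rfl

lemma pathExpect_succ (P : Matrix S S ℝ) (n : ℕ) (s : S) (G : (Fin (n + 2) → S) → ℝ) :
    pathExpect P (n + 1) s G =
      ∑ s', P s s' * pathExpect P n s' (fun g => G (Fin.cons s g)) := by
  rw [pathExpect, sum_ite_head_eq, sum_eq_sum_ite_head]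
  refine sum_congr rfl fun s' _ => ?_
  rw [pathExpect, mul_sum]
  refine sum_congr rfl fun g _ => ?_
  split_ifs with h
  · rw [pathWeight_cons, h]; ring
  · rw [mul_zero]

lemma pathExpect_one (P : Matrix S S ℝ) (hP : ∀ s, ∑ s', P s s' = 1) (n : ℕ) (s : S) :
    pathExpect P n s (fun _ => 1) = 1 := by
  induction n generalizing s with
  | zero => exact pathExpect_zero P s _
  | succ n ih => simp only [pathExpect_succ, ih, mul_one, hP]

def hitProb (P : Matrix S S ℝ) (s₀ : S) (n : ℕ) (s : S) : ℝ :=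
  pathExpect P n s fun w => if ∃ t, w t = s₀ then 1 else 0

lemma hitProb_zero (P : Matrix S S ℝ) (s₀ s : S) :
    hitProb P s₀ 0 s = if s = s₀ then 1 else 0 := by
  simp [hitProb, pathExpect_zero]

lemma hitProb_succ (P : Matrix S S ℝ) (hP : ∀ s, ∑ s', P s s' = 1) (s₀ : S) (n : ℕ)
    (s : S) :
    hitProb P s₀ (n + 1) s = if s = s₀ then 1 else ∑ s', P s s' * hitProb P s₀ n s' := by
  simp only [hitProb, pathExpect_succ, Fin.exists_fin_succ, Fin.cons_zero, Fin.cons_succ]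
  split_ifs with h
  · simp [h, pathExpect_one P hP, hP]
  · simp [h]

lemma geom_sum_killed_succ_apply (P : Matrix S S ℝ) (s₀ : S) (n : ℕ) (s : S) :
    (∑ t ∈ range (n + 2), killed P s₀ ^ t) s s₀ =
      if s = s₀ then 1
      else ∑ s', P s s' * (∑ t ∈ range (n + 1), killed P s₀ ^ t) s' s₀ := by
  rw [geom_sum_succ, Matrix.add_apply, Matrix.mul_apply, Matrix.one_apply]
  split_ifs with h <;> simp [killed, h]

lemma hitProb_eq_geom_sum_killed (P : Matrix S S ℝ) (hP : ∀ s, ∑ s', P s s' = 1) (s₀ : S)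
    (n : ℕ) (s : S) :
    hitProb P s₀ n s = (∑ t ∈ range (n + 1), killed P s₀ ^ t) s s₀ := by
  induction n generalizing s with
  | zero => simp [hitProb_zero, Matrix.one_apply]
  | succ n ih => simp only [hitProb_succ P hP, geom_sum_killed_succ_apply, ih]

end MarkovChain

theorem hitting_prob_eq_killed_occupation_general
    {S : Type*} [Fintype S] [DecidableEq S]
    (P : Matrix S S ℝ)
    (hPsum : ∀ s, (∑ s', P s s') = 1)
    (s₀ : S)
    (Q : Matrix S S ℝ)
    (hQ : Q = Matrix.of fun s s' => if s = s₀ then 0 else P s s')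
    (n : ℕ) (s : S) :
    (∑ w : Fin (n + 1) → S,
        (if w 0 = s ∧ ∃ t, w t = s₀ then ∏ t : Fin n, P (w t.castSucc) (w t.succ) else 0))
      = ∑ t ∈ Finset.range (n + 1), (Q ^ t) s s₀ := by
  obtain rfl : Q = MarkovChain.killed P s₀ := hQ
  rw [← Matrix.sum_apply, ← MarkovChain.hitProb_eq_geom_sum_killed P hPsum]
  refine sum_congr rfl fun w _ => ?_
  simp [ite_and, MarkovChain.pathWeight]

/-- The probability of hitting the home state s₀ within n steps of a Markov chain with
transition matrix P started at s equals the total occupation of s₀ under the killed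
transition matrix Q = P·(1 − 1{s = s₀}). -/
theorem hitting_prob_eq_killed_occupation
    {S : Type*} [Fintype S] [DecidableEq S] [Nonempty S]
    (P : Matrix S S ℝ)
    (hP0 : ∀ s s', 0 ≤ P s s')
    (hPsum : ∀ s, (∑ s', P s s') = 1)
    (s₀ : S)
    (Q : Matrix S S ℝ)
    (hQ : Q = Matrix.of fun s s' => if s = s₀ then 0 else P s s')
    (n : ℕ) (s : S) :
    (∑ w : Fin (n + 1) → S,
        (if w 0 = s ∧ ∃ t, w t = s₀ then ∏ t : Fin n, P (w t.castSucc) (w t.succ) else 0))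
      = ∑ t ∈ Finset.range (n + 1), (Q ^ t) s s₀ :=
  hitting_prob_eq_killed_occupation_general P hPsum s₀ Q hQ n s
end
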